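/- arXiv:2409.08086 — 3 statements merged into one kernel-verified Lean document; each statement's English description precedes it below -/
import Mathlib

section
/- Ping-pong concatenation lemma: Let a group H = ⟨a,b⟩ act on a set X, let X₁, X₂ ⊆ X be disjoint and K₁ ⊆ X₁, K₂ ⊆ X₂ nonempty. For subsets C₁,C₂,D₁,D₂ ⊆ X, say a reduced word w̄ in the free group F₂ on symbols ā, b̄ belongs to W(C₁,C₂,D₁,D₂) if: w(C₁) ⊆ D₂ when w̄ starts with ā and ends with ā; w(C₂) ⊆ D₂ when w̄ starts with ā and ends with b̄; w(C₁) ⊆ D₁ when w̄ starts with b̄ and ends with ā; w(C₂) ⊆ D₁ when w̄ starts with b̄ and ends with b̄ (where w is the evaluation of w̄ in H). Set W_{K→X} = W(K₁,K₂,X₁,X₂) and W_{X→K} = W(X₁,X₂,K₁,K₂). If w̄ = w̄₁⋯w̄ₙ is a decomposition into exact subwords alternating between W_{K→X} and W_{X→K}, then w̄ ∈ W_{K→X}. -/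
open Pointwise

/-- A word in the free group `F₂` on two generators (`true` ↦ `ā`, `false` ↦ `b̄`),
presented as its list of syllables `(sᵢ, nᵢ)`, is reduced if consecutive syllables use
distinct generators and all exponents are nonzero. -/
def IsReducedWord (w : List (Bool × ℤ)) : Prop :=
  w.Chain' (fun p q => p.1 ≠ q.1) ∧ ∀ p ∈ w, p.2 ≠ 0

/-- The evaluation of a word `w̄ ∈ F₂` in the group `H = ⟨a, b⟩`. -/
def evalW {H : Type*} [Group H] (a b : H) (w : List (Bool × ℤ)) : H :=
  (w.map fun s => (if s.1 then a else b) ^ s.2).prod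

/-- Membership in `W(C₁, C₂, D₁, D₂)`: the reduced word `w̄` satisfies
`w(C₁) ⊆ D₂` if `w̄ ∈ F₂^{a,a}`, `w(C₂) ⊆ D₂` if `w̄ ∈ F₂^{a,b}`,
`w(C₁) ⊆ D₁` if `w̄ ∈ F₂^{b,a}`, and `w(C₂) ⊆ D₁` if `w̄ ∈ F₂^{b,b}`
(the source is governed by the last letter of `w̄`, which acts first, and the
target by its first letter). -/
def memW {H X : Type*} [Group H] [MulAction H X] (a b : H) (C₁ C₂ D₁ D₂ : Set X)
    (w : List (Bool × ℤ)) : Prop :=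
  IsReducedWord w ∧ ∃ h : w ≠ [],
    evalW a b w • (if (w.getLast h).1 then C₁ else C₂) ⊆ (if (w.head h).1 then D₂ else D₁)

/-!
Two reduced words compose along matching ping-pong sets: if the target sets of `v̄` lie in the
source sets of `ū` and `ūv̄` is reduced, then the last letter of `ū` differs from the first letter
of `v̄`, so `v` lands exactly in the source set that `u` is responsible for. Concatenating an
alternating chain from the right, a block starting in `W_{K→X}` gives a word in `W_{K→X}`, and a
block starting in `W_{X→K}` gives a word in `W_{K→K}`; since `K_i ⊆ X_i` the latter
is again contained in `W_{K→X}`.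
-/

theorem IsReducedWord.of_append_right {u v : List (Bool × ℤ)} (h : IsReducedWord (u ++ v)) :
    IsReducedWord v :=
  ⟨(List.isChain_append.mp h.1).2.1, fun p hp => h.2 p (List.mem_append_right u hp)⟩

theorem IsReducedWord.getLast_ne_head {u v : List (Bool × ℤ)} (h : IsReducedWord (u ++ v))
    (hu : u ≠ []) (hv : v ≠ []) : (u.getLast hu).1 ≠ (v.head hv).1 :=
  (List.isChain_append.mp h.1).2.2 _ (by simp [List.getLast?_eq_some_getLast hu]) _
    (by simp [List.head?_eq_some_head hv])

theorem evalW_append {H : Type*} [Group H] (a b : H) (u v : List (Bool × ℤ)) :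
    evalW a b (u ++ v) = evalW a b u * evalW a b v := by
  simp [evalW]

def Alternating {α : Type*} (P Q : α → Prop) (l : List α) : Prop :=
  ∀ i : ℕ, ∀ h : i < l.length, (i % 2 = 0 → P (l.get ⟨i, h⟩)) ∧ (i % 2 = 1 → Q (l.get ⟨i, h⟩))

theorem alternating_cons {α : Type*} {P Q : α → Prop} {x : α} {l : List α} :
    Alternating P Q (x :: l) ↔ P x ∧ Alternating Q P l := by
  refine ⟨fun h => ⟨(h 0 (by simp)).1 rfl, fun i hi => ?_⟩, fun ⟨hx, hl⟩ i hi => ?_⟩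
  · have := h (i + 1) (by simpa using hi)
    exact ⟨fun hp => this.2 (by omega), fun hp => this.1 (by omega)⟩
  · match i, hi with
    | 0, _ => exact ⟨fun _ => hx, fun h => absurd h (by decide)⟩
    | i + 1, hi =>
      have := hl i (by simpa using hi)
      exact ⟨fun hp => this.2 (by omega), fun hp => this.1 (by omega)⟩

section PingPong

variable {H X : Type*} [Group H] [MulAction H X] {a b : H}

theorem memW_mono {C₁ C₂ D₁ D₂ C₁' C₂' D₁' D₂' : Set X} {w : List (Bool × ℤ)}
    (h : memW a b C₁ C₂ D₁ D₂ w) (hC₁ : C₁' ⊆ C₁) (hC₂ : C₂' ⊆ C₂)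
    (hD₁ : D₁ ⊆ D₁') (hD₂ : D₂ ⊆ D₂') : memW a b C₁' C₂' D₁' D₂' w := by
  obtain ⟨hred, hne, hsub⟩ := h
  refine ⟨hred, hne, (Set.smul_set_mono ?_).trans (hsub.trans ?_)⟩
  · split <;> assumption
  · split <;> assumption

theorem memW_append {C₁ C₂ D₁ D₂ E₁ E₂ F₁ F₂ : Set X} {u v : List (Bool × ℤ)}
    (hu : memW a b C₁ C₂ D₁ D₂ u) (hv : memW a b E₁ E₂ F₁ F₂ v)
    (hF₁ : F₁ ⊆ C₁) (hF₂ : F₂ ⊆ C₂) (hred : IsReducedWord (u ++ v)) :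
    memW a b E₁ E₂ D₁ D₂ (u ++ v) := by
  obtain ⟨-, hu₀, hsu⟩ := hu
  obtain ⟨-, hv₀, hsv⟩ := hv
  have hne : u ++ v ≠ [] := by simp [hu₀]
  have hlast : (u ++ v).getLast hne = v.getLast hv₀ := List.getLast_append_of_ne_nil hne hv₀
  have hhead : (u ++ v).head hne = u.head hu₀ := List.head_append_of_ne_nil hu₀
  have hturn := hred.getLast_ne_head hu₀ hv₀
  refine ⟨hred, hne, ?_⟩
  rw [hlast, hhead, evalW_append, mul_smul]
  refine (Set.smul_set_mono (hsv.trans ?_)).trans hsu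
  cases hv₁ : (v.head hv₀).1 <;> cases hu₁ : (u.getLast hu₀).1 <;> simp_all

variable {X₁ X₂ K₁ K₂ : Set X}

theorem memW_flatten_of_alternating (hK₁ : K₁ ⊆ X₁) (hK₂ : K₂ ⊆ X₂)
    {ws : List (List (Bool × ℤ))} (hne : ws ≠ []) (hred : IsReducedWord ws.flatten) :
    (Alternating (memW a b K₁ K₂ X₁ X₂) (memW a b X₁ X₂ K₁ K₂) ws →
      memW a b K₁ K₂ X₁ X₂ ws.flatten) ∧
    (Alternating (memW a b X₁ X₂ K₁ K₂) (memW a b K₁ K₂ X₁ X₂) ws →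
      memW a b K₁ K₂ K₁ K₂ ws.flatten) := by
  induction ws with
  | nil => exact absurd rfl hne
  | cons u rest ih =>
    simp only [alternating_cons]
    rcases eq_or_ne rest [] with rfl | hrest
    · simp only [List.flatten_cons, List.flatten_nil, List.append_nil]
      exact ⟨fun h => h.1, fun h => memW_mono h.1 hK₁ hK₂ subset_rfl subset_rfl⟩
    · rw [List.flatten_cons] at hred ⊢
      have ih := ih hrest hred.of_append_right
      exact ⟨fun h => memW_mono (memW_append h.1 (ih.2 h.2) subset_rfl subset_rfl hred)
          subset_rfl subset_rfl subset_rfl subset_rfl,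
        fun h => memW_append h.1 (ih.1 h.2) subset_rfl subset_rfl hred⟩

end PingPong

theorem stmt_13_general {H X : Type*} [Group H] [MulAction H X] (a b : H)
    (X₁ X₂ K₁ K₂ : Set X)
    (hK₁X : K₁ ⊆ X₁) (hK₂X : K₂ ⊆ X₂)
    (ws : List (List (Bool × ℤ))) (hne : ws ≠ [])
    (hred : IsReducedWord ws.flatten)
    (halt :
      (∀ i : ℕ, ∀ h : i < ws.length,
        (i % 2 = 0 → memW a b K₁ K₂ X₁ X₂ (ws.get ⟨i, h⟩)) ∧
        (i % 2 = 1 → memW a b X₁ X₂ K₁ K₂ (ws.get ⟨i, h⟩))) ∨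
      (∀ i : ℕ, ∀ h : i < ws.length,
        (i % 2 = 0 → memW a b X₁ X₂ K₁ K₂ (ws.get ⟨i, h⟩)) ∧
        (i % 2 = 1 → memW a b K₁ K₂ X₁ X₂ (ws.get ⟨i, h⟩)))) :
    memW a b K₁ K₂ X₁ X₂ ws.flatten := by
  obtain ⟨hKX, hKK⟩ := memW_flatten_of_alternating (a := a) (b := b) hK₁X hK₂X hne hred
  rcases halt with h | h
  · exact hKX h
  · exact memW_mono (hKK h) subset_rfl subset_rfl hK₁X hK₂X

/-- Ping-pong concatenation lemma: with `W_{K→X} = W(K₁,K₂,X₁,X₂)` and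
`W_{X→K} = W(X₁,X₂,K₁,K₂)`, if `w̄ = w̄₁⋯w̄ₙ` is a decomposition into exact subwords
alternating between `W_{K→X}` and `W_{X→K}`, then `w̄ ∈ W_{K→X}`. -/
theorem stmt_13 {H X : Type*} [Group H] [MulAction H X] (a b : H)
    (X₁ X₂ K₁ K₂ : Set X) (hdisj : Disjoint X₁ X₂)
    (hK₁ : K₁.Nonempty) (hK₂ : K₂.Nonempty) (hK₁X : K₁ ⊆ X₁) (hK₂X : K₂ ⊆ X₂)
    (ws : List (List (Bool × ℤ))) (hne : ws ≠ []) (hnonempty : ∀ u ∈ ws, u ≠ [])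
    (hred : IsReducedWord ws.flatten)
    (halt :
      (∀ i : ℕ, ∀ h : i < ws.length,
        (i % 2 = 0 → memW a b K₁ K₂ X₁ X₂ (ws.get ⟨i, h⟩)) ∧
        (i % 2 = 1 → memW a b X₁ X₂ K₁ K₂ (ws.get ⟨i, h⟩))) ∨
      (∀ i : ℕ, ∀ h : i < ws.length,
        (i % 2 = 0 → memW a b X₁ X₂ K₁ K₂ (ws.get ⟨i, h⟩)) ∧
        (i % 2 = 1 → memW a b K₁ K₂ X₁ X₂ (ws.get ⟨i, h⟩)))) :
    memW a b K₁ K₂ X₁ X₂ ws.flatten :=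
  stmt_13_general a b X₁ X₂ K₁ K₂ hK₁X hK₂X ws hne hred halt
end

section
/- With the setup of the ping-pong variant, suppose additionally that ā^n and b̄^n belong to W_{X→K} for every integer |n| ≥ 2. Then every relator of H has an exact subword belonging to 𝒜 \ W_{K→X}, where 𝒜 is the set of nonempty reduced words in F₂ all of whose syllables are ā^{±1} or b̄^{±1}. If furthermore (āb̄)^{±1} and (b̄ā)^{±1} belong to W_{X→K}, then every relator of H has an exact subword in (ℬ ∪ ℬ⁻¹) \ W_{K→X}, where ℬ = {(āb̄⁻¹)^k, (b̄⁻¹ā)^k, (āb̄⁻¹)^{k-1}ā, (b̄⁻¹ā)^{k-1}b̄⁻¹ : k > 0}. -/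
open Pointwise

/-- `𝒜`: the set of nonempty reduced words all of whose syllables are `ā^{±1}`, `b̄^{±1}`. -/
def setA : Set (List (Bool × ℤ)) :=
  {w | w ≠ [] ∧ IsReducedWord w ∧ ∀ p ∈ w, p.2 = 1 ∨ p.2 = -1}

/-- `ℬ = {(āb̄⁻¹)^k, (b̄⁻¹ā)^k, (āb̄⁻¹)^{k-1}ā, (b̄⁻¹ā)^{k-1}b̄⁻¹ : k > 0}`. -/
def setB : Set (List (Bool × ℤ)) :=
  {w | ∃ k : ℕ, 0 < k ∧
    (w = (List.replicate k ([(true, 1), (false, -1)] : List (Bool × ℤ))).flatten ∨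
     w = (List.replicate k ([(false, -1), (true, 1)] : List (Bool × ℤ))).flatten ∨
     w = (List.replicate (k - 1) ([(true, 1), (false, -1)] : List (Bool × ℤ))).flatten
          ++ [(true, 1)] ∨
     w = (List.replicate (k - 1) ([(false, -1), (true, 1)] : List (Bool × ℤ))).flatten
          ++ [(false, -1)])}

/-- The formal inverse of a word: reverse the syllables and negate the exponents. -/
def wordInv (w : List (Bool × ℤ)) : List (Bool × ℤ) :=
  (w.map fun p => (p.1, -p.2)).reverse


/-!
A relator acts trivially, so it suffices to push a point of `K` through `w` from the right and
land in the wrong half of `X₁ ⊔ X₂`. Cut `w` into pieces of `W_{X→K}` (syllables with exponent of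
size at least 2, and in the second part the same-sign pairs `(āb̄)^{±1}`, `(b̄ā)^{±1}`) and maximal
runs of the remaining unit syllables. If every run lies in `W_{K→X}`, the point alternates between
`K` and `X`, always in the half opposite to the generator of the piece just applied. When the first
and last syllables of `w` use the same generator this contradicts `w • x = x`; otherwise one first
conjugates `w` by a big power of its first generator. In the second part the runs alternate in
sign, so they lie in `ℬ ∪ ℬ⁻¹`.
-/

theorem Int.eq_one_or_eq_neg_one_or_two_le_abs {n : ℤ} (hn : n ≠ 0) :
    (n = 1 ∨ n = -1) ∨ 2 ≤ |n| := by
  rw [le_abs]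
  omega

theorem Bool.ite_eq_ite_of_ne {α : Type*} {g h : Bool} (hgh : g ≠ h) (A B : α) :
    (if h then A else B) = if g then B else A := by
  cases g <;> cases h <;> simp_all

theorem ite_subset_ite {α : Type*} {A B C D : Set α} (hAC : A ⊆ C) (hBD : B ⊆ D) (p : Prop)
    [Decidable p] : (if p then A else B) ⊆ if p then C else D := by
  split_ifs <;> assumption

theorem List.IsChain.and {α : Type*} {R S : α → α → Prop} {l : List α} (hR : l.IsChain R)
    (hS : l.IsChain S) : l.IsChain fun a b => R a b ∧ S a b := by
  induction l using List.twoStepInduction <;> grind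

theorem List.cons_flatten_replicate_pair {α : Type*} (x y : α) (k : ℕ) :
    x :: (List.replicate k [y, x]).flatten = (List.replicate k [x, y]).flatten ++ [x] := by
  induction k with
  | zero => rfl
  | succ k ih => simp [List.replicate_succ, ih]

theorem List.eq_flatten_replicate_of_isChain_ne {α : Type*} {x y : α} {l : List α}
    (hl : (x :: l).IsChain (· ≠ ·)) (hxy : ∀ z ∈ l, z = x ∨ z = y) :
    ∃ k, x :: l = (List.replicate k [x, y]).flatten ++ [x] ∨
      x :: l = (List.replicate (k + 1) [x, y]).flatten := by
  induction l generalizing x y with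
  | nil => exact ⟨0, Or.inl rfl⟩
  | cons u l ih =>
    obtain ⟨hxu, hl⟩ := List.isChain_cons_cons.mp hl
    obtain rfl : u = y := (hxy u List.mem_cons_self).resolve_left hxu.symm
    obtain ⟨k, hk | hk⟩ := ih hl fun z hz => (hxy z (List.mem_cons_of_mem _ hz)).symm
    · refine ⟨k, Or.inr ?_⟩
      rw [hk, ← List.cons_append, List.cons_flatten_replicate_pair]
      simp [List.replicate_succ']
    · exact ⟨k + 1, Or.inl (by rw [hk, List.cons_flatten_replicate_pair])⟩

theorem evalW_nil {H : Type*} [Group H] (a b : H) : evalW a b [] = 1 := rfl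

theorem evalW_singleton {H : Type*} [Group H] (a b : H) (s : Bool × ℤ) :
    evalW a b [s] = (if s.1 then a else b) ^ s.2 := by
  simp [evalW]

theorem evalW_cons {H : Type*} [Group H] (a b : H) (s : Bool × ℤ) (w : List (Bool × ℤ)) :
    evalW a b (s :: w) = evalW a b [s] * evalW a b w :=
  evalW_append a b [s] w

theorem IsReducedWord.infix {u w : List (Bool × ℤ)} (hw : IsReducedWord w) (hu : u <:+: w) :
    IsReducedWord u :=
  ⟨hw.1.infix hu, fun s hs => hw.2 s (hu.subset hs)⟩

theorem mem_setB_of_isChain_ne {w : List (Bool × ℤ)} (hw : w ≠ []) (hne : w.IsChain (· ≠ ·))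
    (hmem : ∀ s ∈ w, s = (true, 1) ∨ s = (false, -1)) : w ∈ setB := by
  obtain ⟨s, l, rfl⟩ := List.exists_cons_of_ne_nil hw
  rcases hmem s List.mem_cons_self with rfl | rfl
  · obtain ⟨k, hk | hk⟩ := List.eq_flatten_replicate_of_isChain_ne hne
      fun z hz => hmem z (List.mem_cons_of_mem _ hz)
    · exact ⟨k + 1, k.succ_pos, by simp [hk]⟩
    · exact ⟨k + 1, k.succ_pos, Or.inl hk⟩
  · obtain ⟨k, hk | hk⟩ := List.eq_flatten_replicate_of_isChain_ne hne
      fun z hz => (hmem z (List.mem_cons_of_mem _ hz)).symm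
    · exact ⟨k + 1, k.succ_pos, by simp [hk]⟩
    · exact ⟨k + 1, k.succ_pos, Or.inr (Or.inl hk)⟩

theorem mem_setB_or_wordInv_mem_setB {w : List (Bool × ℤ)} (hw : w ≠ [])
    (hgen : w.IsChain fun s u => s.1 ≠ u.1) (hunit : ∀ s ∈ w, s.2 = 1 ∨ s.2 = -1)
    (halt : w.IsChain fun s u => s.2 ≠ u.2) : w ∈ setB ∨ wordInv w ∈ setB := by
  let P : Bool × ℤ → Prop := fun s => s = (true, 1) ∨ s = (false, -1)
  -- alternating both generator and sign, a run never leaves `{ā, b̄⁻¹}` or `{ā⁻¹, b̄}`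
  have hstep : w.IsChain fun s u => (P s ↔ P u) := by
    refine (hgen.and halt).imp_of_mem_imp fun s u hs hu ⟨h1, h2⟩ => ?_
    rcases s with ⟨_ | _, n⟩ <;> rcases u with ⟨_ | _, m⟩ <;>
      rcases hunit _ hs with rfl | rfl <;> rcases hunit _ hu with rfl | rfl <;> simp_all [P]
  obtain ⟨s₀, l, rfl⟩ := List.exists_cons_of_ne_nil hw
  have hall : ∀ s ∈ s₀ :: l, P s ↔ P s₀ :=
    hstep.induction _ _ (fun s u hsu hs => hsu.symm.trans hs) fun _ => Iff.rfl
  by_cases h₀ : P s₀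
  · exact Or.inl (mem_setB_of_isChain_ne hw (hgen.imp fun s u h e => h (congrArg Prod.fst e))
      fun s hs => (hall s hs).mpr h₀)
  · refine Or.inr (mem_setB_of_isChain_ne (by simp [wordInv]) ?_ ?_)
    · rw [wordInv, List.isChain_reverse, List.isChain_map]
      exact hgen.imp fun s u h e => h (congrArg Prod.fst e).symm
    · simp only [wordInv, List.mem_reverse, List.mem_map]
      rintro _ ⟨s, hs, rfl⟩
      have := (hall s hs).not.mpr h₀
      rcases s with ⟨_ | _, n⟩ <;> rcases hunit _ hs with rfl | rfl <;> simp_all [P]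

theorem memW_pair_of_eq_exp {H X : Type*} [Group H] [MulAction H X] {a b : H}
    {C₁ C₂ D₁ D₂ : Set X}
    (hab : memW a b C₁ C₂ D₁ D₂ [(true, 1), (false, 1)])
    (hab' : memW a b C₁ C₂ D₁ D₂ [(false, -1), (true, -1)])
    (hba : memW a b C₁ C₂ D₁ D₂ [(false, 1), (true, 1)])
    (hba' : memW a b C₁ C₂ D₁ D₂ [(true, -1), (false, -1)])
    {s u : Bool × ℤ} (hsu : s.1 ≠ u.1) (hs : s.2 = 1 ∨ s.2 = -1) (hexp : s.2 = u.2) :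
    memW a b C₁ C₂ D₁ D₂ [s, u] := by
  obtain ⟨_ | _, m⟩ := s <;> obtain ⟨_ | _, n⟩ := u <;> simp only at hsu hs hexp <;>
    first | exact absurd rfl hsu | (subst hexp; rcases hs with rfl | rfl <;> assumption)

section PingPong

variable {H X : Type*} [Group H] [MulAction H X] {a b : H} {X₁ X₂ K₁ K₂ : Set X}
  {R : Bool × ℤ → Bool × ℤ → Prop} {x : X}

theorem memW.smul_mem {C₁ C₂ D₁ D₂ : Set X} {w : List (Bool × ℤ)}
    (h : memW a b C₁ C₂ D₁ D₂ w) (hw : w ≠ []) (hx : x ∈ if (w.getLast hw).1 then C₁ else C₂) :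
    evalW a b w • x ∈ if (w.head hw).1 then D₂ else D₁ := by
  obtain ⟨-, _, hsub⟩ := h
  exact hsub (Set.smul_mem_smul_set hx)

theorem memW_singleton_of_two_le_abs
    (hpow : ∀ n : ℤ, 2 ≤ |n| →
      memW a b X₁ X₂ K₁ K₂ [(true, n)] ∧ memW a b X₁ X₂ K₁ K₂ [(false, n)])
    {s : Bool × ℤ} (hs : 2 ≤ |s.2|) : memW a b X₁ X₂ K₁ K₂ [s] := by
  obtain ⟨_ | _, n⟩ := s
  exacts [(hpow n hs).2, (hpow n hs).1]

theorem notMem_ite_of_mem_ite (hdisj : Disjoint X₁ X₂) (hK₁X : K₁ ⊆ X₁) (hK₂X : K₂ ⊆ X₂)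
    (g : Bool) (hx : x ∈ if g then K₁ else K₂) : x ∉ if g then X₂ else X₁ := by
  cases g <;> simp only [Bool.false_eq_true, ↓reduceIte] at hx ⊢
  exacts [fun h => Set.disjoint_left.mp hdisj h (hK₂X hx), Set.disjoint_left.mp hdisj (hK₁X hx)]

/- Adjacent unit letters `t, u` with `R t u` are read as a two-letter word of `W_{X→K}`; the
runs meant here are the ones containing no such pair. -/
variable (a b X₁ X₂ K₁ K₂) in
def UnitRunsMemW (R : Bool × ℤ → Bool × ℤ → Prop) (w : List (Bool × ℤ)) : Prop :=
  ∀ r, r <:+: w → r ≠ [] → (∀ t ∈ r, t.2 = 1 ∨ t.2 = -1) → r.IsChain (fun t u => ¬ R t u) →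
    memW a b K₁ K₂ X₁ X₂ r

theorem UnitRunsMemW.mono {u w : List (Bool × ℤ)} (h : UnitRunsMemW a b X₁ X₂ K₁ K₂ R w)
    (hu : u <:+: w) : UnitRunsMemW a b X₁ X₂ K₁ K₂ R u :=
  fun r hr => h r (hr.trans hu)

/- Where the suffix `s :: q` of a word moves a point `x`: into the half of `K` opposite to `s.1`
(when `s` starts a word of `W_{X→K}`), or to the image under a run `s :: r` of a point of `K` in
the half matching the end of that run. -/
variable (a b K₁ K₂) in
def PingPongState (R : Bool × ℤ → Bool × ℤ → Prop) (x : X) (s : Bool × ℤ)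
    (q : List (Bool × ℤ)) : Prop :=
  evalW a b (s :: q) • x ∈ (if s.1 then K₂ else K₁) ∨
  ∃ r q', q = r ++ q' ∧ (∀ t ∈ s :: r, t.2 = 1 ∨ t.2 = -1) ∧
    (s :: r).IsChain (fun t u => ¬ R t u) ∧
    evalW a b q' • x ∈ if ((s :: r).getLast (List.cons_ne_nil _ _)).1 then K₁ else K₂

theorem PingPongState.smul_mem {s : Bool × ℤ} {q : List (Bool × ℤ)} (hK₁X : K₁ ⊆ X₁)
    (hK₂X : K₂ ⊆ X₂) (hruns : UnitRunsMemW a b X₁ X₂ K₁ K₂ R (s :: q))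
    (h : PingPongState a b K₁ K₂ R x s q) : evalW a b (s :: q) • x ∈ if s.1 then X₂ else X₁ := by
  rcases h with hK | ⟨r, q', rfl, hunit, hchain, hx⟩
  · exact ite_subset_ite hK₂X hK₁X _ hK
  · have hrun := hruns (s :: r) (List.infix_append [] _ q') (List.cons_ne_nil _ _) hunit hchain
    rw [← List.cons_append, evalW_append, mul_smul]
    exact hrun.smul_mem (List.cons_ne_nil _ _) hx

theorem pingPongState_nil (hK₁X : K₁ ⊆ X₁) (hK₂X : K₂ ⊆ X₂)
    (hbig : ∀ s : Bool × ℤ, 2 ≤ |s.2| → memW a b X₁ X₂ K₁ K₂ [s]) {s : Bool × ℤ} (hs : s.2 ≠ 0)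
    (hx : x ∈ if s.1 then K₁ else K₂) : PingPongState a b K₁ K₂ R x s [] := by
  rcases Int.eq_one_or_eq_neg_one_or_two_le_abs hs with hunit | hbs
  · exact Or.inr ⟨[], [], rfl, by simpa using hunit, List.isChain_singleton _,
      by rwa [evalW_nil, one_smul]⟩
  · exact Or.inl ((hbig s hbs).smul_mem (List.cons_ne_nil _ _) (ite_subset_ite hK₁X hK₂X _ hx))

theorem PingPongState.cons (hK₁X : K₁ ⊆ X₁) (hK₂X : K₂ ⊆ X₂)
    (hbig : ∀ s : Bool × ℤ, 2 ≤ |s.2| → memW a b X₁ X₂ K₁ K₂ [s])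
    (hpair : ∀ s u : Bool × ℤ, s.1 ≠ u.1 → (s.2 = 1 ∨ s.2 = -1) → (u.2 = 1 ∨ u.2 = -1) →
      R s u → memW a b X₁ X₂ K₁ K₂ [s, u])
    {s u : Bool × ℤ} {q : List (Bool × ℤ)} (hs : s.2 ≠ 0) (hsu : s.1 ≠ u.1)
    (hruns : UnitRunsMemW a b X₁ X₂ K₁ K₂ R (u :: q)) (h : PingPongState a b K₁ K₂ R x u q)
    (hq : evalW a b q • x ∈ if u.1 then X₁ else X₂) :
    PingPongState a b K₁ K₂ R x s (u :: q) := by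
  have hX : evalW a b (u :: q) • x ∈ if s.1 then X₁ else X₂ := by
    rw [← Bool.ite_eq_ite_of_ne hsu]
    exact h.smul_mem hK₁X hK₂X hruns
  rcases Int.eq_one_or_eq_neg_one_or_two_le_abs hs with hs₁ | hbs
  swap
  · left
    rw [evalW_cons, mul_smul]
    exact (hbig s hbs).smul_mem (List.cons_ne_nil _ _) hX
  by_cases hsuR : (u.2 = 1 ∨ u.2 = -1) ∧ R s u
  · left
    change evalW a b ([s, u] ++ q) • x ∈ _
    rw [evalW_append, mul_smul]
    exact (hpair s u hsu hs₁ hsuR.1 hsuR.2).smul_mem (List.cons_ne_nil _ _) hq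
  right
  rcases h with hK | ⟨r, q', rfl, hunit, hchain, hx⟩
  · refine ⟨[], u :: q, rfl, by simpa using hs₁, List.isChain_singleton _, ?_⟩
    rwa [Bool.ite_eq_ite_of_ne hsu] at hK
  · refine ⟨u :: r, q', rfl, List.forall_mem_cons.mpr ⟨hs₁, hunit⟩, ?_, hx⟩
    exact List.isChain_cons_cons.mpr ⟨fun hR => hsuR ⟨hunit u List.mem_cons_self, hR⟩, hchain⟩

theorem pingPongState (hK₁X : K₁ ⊆ X₁) (hK₂X : K₂ ⊆ X₂)
    (hbig : ∀ s : Bool × ℤ, 2 ≤ |s.2| → memW a b X₁ X₂ K₁ K₂ [s])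
    (hpair : ∀ s u : Bool × ℤ, s.1 ≠ u.1 → (s.2 = 1 ∨ s.2 = -1) → (u.2 = 1 ∨ u.2 = -1) →
      R s u → memW a b X₁ X₂ K₁ K₂ [s, u]) :
    ∀ (s : Bool × ℤ) (q : List (Bool × ℤ)), IsReducedWord (s :: q) →
      UnitRunsMemW a b X₁ X₂ K₁ K₂ R (s :: q) →
      x ∈ (if ((s :: q).getLast (List.cons_ne_nil _ _)).1 then K₁ else K₂) →
      PingPongState a b K₁ K₂ R x s q
  | s, [], hred, _, hx => pingPongState_nil hK₁X hK₂X hbig (hred.2 s List.mem_cons_self) hx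
  | s, [u], hred, hruns, hx =>
    (pingPongState hK₁X hK₂X hbig hpair u [] (hred.infix (List.suffix_cons s _).isInfix)
      (hruns.mono (List.suffix_cons s _).isInfix) hx).cons hK₁X hK₂X hbig hpair
      (hred.2 s List.mem_cons_self) (List.isChain_cons_cons.mp hred.1).1
      (hruns.mono (List.suffix_cons s _).isInfix)
      (by rw [evalW_nil, one_smul]; exact ite_subset_ite hK₁X hK₂X _ hx)
  | s, u :: t :: q, hred, hruns, hx => by
    have htail := (List.suffix_cons s (u :: t :: q)).isInfix
    have htail' := ((List.suffix_cons u (t :: q)).isInfix).trans htail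
    have hut : u.1 ≠ t.1 := (List.isChain_cons_cons.mp (hred.infix htail).1).1
    have hq := (pingPongState hK₁X hK₂X hbig hpair t q (hred.infix htail') (hruns.mono htail')
      hx).smul_mem hK₁X hK₂X (hruns.mono htail')
    rw [Bool.ite_eq_ite_of_ne hut] at hq
    exact (pingPongState hK₁X hK₂X hbig hpair u (t :: q) (hred.infix htail) (hruns.mono htail)
      hx).cons hK₁X hK₂X hbig hpair (hred.2 s List.mem_cons_self)
      (List.isChain_cons_cons.mp hred.1).1 (hruns.mono htail) hq

theorem evalW_smul_mem_of_pingPong (hK₁X : K₁ ⊆ X₁) (hK₂X : K₂ ⊆ X₂)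
    (hbig : ∀ s : Bool × ℤ, 2 ≤ |s.2| → memW a b X₁ X₂ K₁ K₂ [s])
    (hpair : ∀ s u : Bool × ℤ, s.1 ≠ u.1 → (s.2 = 1 ∨ s.2 = -1) → (u.2 = 1 ∨ u.2 = -1) →
      R s u → memW a b X₁ X₂ K₁ K₂ [s, u])
    {s : Bool × ℤ} {q : List (Bool × ℤ)} (hred : IsReducedWord (s :: q))
    (hruns : UnitRunsMemW a b X₁ X₂ K₁ K₂ R (s :: q))
    (hx : x ∈ if ((s :: q).getLast (List.cons_ne_nil _ _)).1 then K₁ else K₂) :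
    evalW a b (s :: q) • x ∈ if s.1 then X₂ else X₁ :=
  (pingPongState hK₁X hK₂X hbig hpair s q hred hruns hx).smul_mem hK₁X hK₂X hruns

/- Writing `s = g^n`, the conjugate `g^{3n} · (t :: q) · g^{-2n}` of `s :: t :: q` has big letters
at both ends, which then use the same generator. -/
theorem evalW_conj_smul_mem_of_pingPong (hK₁X : K₁ ⊆ X₁) (hK₂X : K₂ ⊆ X₂)
    (hbig : ∀ s : Bool × ℤ, 2 ≤ |s.2| → memW a b X₁ X₂ K₁ K₂ [s])
    (hpair : ∀ s u : Bool × ℤ, s.1 ≠ u.1 → (s.2 = 1 ∨ s.2 = -1) → (u.2 = 1 ∨ u.2 = -1) →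
      R s u → memW a b X₁ X₂ K₁ K₂ [s, u])
    {s t : Bool × ℤ} {q : List (Bool × ℤ)} (hred : IsReducedWord (s :: t :: q))
    (hruns : UnitRunsMemW a b X₁ X₂ K₁ K₂ R (s :: t :: q))
    (hcyc : ((t :: q).getLast (List.cons_ne_nil _ _)).1 ≠ s.1)
    (hx : x ∈ if s.1 then K₁ else K₂) :
    evalW a b [(s.1, 3 * s.2)] • evalW a b (t :: q) • evalW a b [(s.1, -2 * s.2)] • x ∈
      if s.1 then K₂ else K₁ := by
  have hn := Int.one_le_abs (hred.2 s List.mem_cons_self)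
  have htail := (List.suffix_cons s (t :: q)).isInfix
  have hx₁ : evalW a b [(s.1, -2 * s.2)] • x ∈
      if ((t :: q).getLast (List.cons_ne_nil _ _)).1 then K₁ else K₂ := by
    rw [Bool.ite_eq_ite_of_ne hcyc.symm]
    refine (hbig (s.1, -2 * s.2) ?_).smul_mem (List.cons_ne_nil _ _) (ite_subset_ite hK₁X hK₂X _ hx)
    simp only [abs_mul, abs_neg, Nat.abs_ofNat]
    omega
  have hy := evalW_smul_mem_of_pingPong hK₁X hK₂X hbig hpair (hred.infix htail)
    (hruns.mono htail) hx₁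
  rw [Bool.ite_eq_ite_of_ne (List.isChain_cons_cons.mp hred.1).1] at hy
  refine (hbig (s.1, 3 * s.2) ?_).smul_mem (List.cons_ne_nil _ _) hy
  simp only [abs_mul, Nat.abs_ofNat]
  omega

theorem evalW_ne_one_of_pingPong (hdisj : Disjoint X₁ X₂) (hK₁ : K₁.Nonempty)
    (hK₂ : K₂.Nonempty) (hK₁X : K₁ ⊆ X₁) (hK₂X : K₂ ⊆ X₂)
    (hbig : ∀ s : Bool × ℤ, 2 ≤ |s.2| → memW a b X₁ X₂ K₁ K₂ [s])
    (hpair : ∀ s u : Bool × ℤ, s.1 ≠ u.1 → (s.2 = 1 ∨ s.2 = -1) → (u.2 = 1 ∨ u.2 = -1) →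
      R s u → memW a b X₁ X₂ K₁ K₂ [s, u])
    {w : List (Bool × ℤ)} (hw : w ≠ []) (hred : IsReducedWord w)
    (hruns : UnitRunsMemW a b X₁ X₂ K₁ K₂ R w) : evalW a b w ≠ 1 := by
  intro hrel
  obtain ⟨s, q, rfl⟩ := List.exists_cons_of_ne_nil hw
  obtain ⟨x, hx⟩ : (if s.1 then K₁ else K₂).Nonempty := by cases s.1 <;> simpa
  by_cases hcyc : ((s :: q).getLast (List.cons_ne_nil _ _)).1 = s.1
  · have hX := evalW_smul_mem_of_pingPong hK₁X hK₂X hbig hpair hred hruns (hcyc ▸ hx)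
    rw [hrel, one_smul] at hX
    exact notMem_ite_of_mem_ite hdisj hK₁X hK₂X _ hx hX
  obtain ⟨t, q, rfl⟩ : ∃ t q', q = t :: q' := by
    cases q with
    | nil => exact absurd rfl hcyc
    | cons t q => exact ⟨t, q, rfl⟩
  rw [List.getLast_cons_cons] at hcyc
  have hK := evalW_conj_smul_mem_of_pingPong hK₁X hK₂X hbig hpair hred hruns hcyc hx
  have hT : evalW a b (t :: q) = ((if s.1 then a else b) ^ s.2)⁻¹ :=
    eq_inv_of_mul_eq_one_right (by rwa [← evalW_singleton, ← evalW_cons])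
  rw [smul_smul, smul_smul, evalW_singleton, evalW_singleton, hT, ← zpow_neg, ← zpow_add,
    ← zpow_add] at hK
  ring_nf at hK
  rw [zpow_zero, one_smul] at hK
  exact notMem_ite_of_mem_ite hdisj hK₁X hK₂X _ hx (ite_subset_ite hK₂X hK₁X _ hK)

end PingPong

/-- with the ping-pong setup, if `ā^n, b̄^n ∈ W_{X→K}` for all `|n| ≥ 2`,
then every relator of `H` has an exact subword in `𝒜 \ W_{K→X}`; if furthermore
`(āb̄)^{±1}, (b̄ā)^{±1} ∈ W_{X→K}`, then every relator of `H` has an exact subword in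
`(ℬ ∪ ℬ⁻¹) \ W_{K→X}`. -/
theorem stmt_15 {H X : Type*} [Group H] [MulAction H X] (a b : H)
    (X₁ X₂ K₁ K₂ : Set X) (hdisj : Disjoint X₁ X₂)
    (hK₁ : K₁.Nonempty) (hK₂ : K₂.Nonempty) (hK₁X : K₁ ⊆ X₁) (hK₂X : K₂ ⊆ X₂)
    (hpow : ∀ n : ℤ, 2 ≤ |n| →
      memW a b X₁ X₂ K₁ K₂ [(true, n)] ∧ memW a b X₁ X₂ K₁ K₂ [(false, n)])
    (w : List (Bool × ℤ)) (hw : w ≠ []) (hred : IsReducedWord w)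
    (hrel : evalW a b w = 1) :
    (∃ u : List (Bool × ℤ), u <:+: w ∧ u ∈ setA ∧ ¬ memW a b K₁ K₂ X₁ X₂ u) ∧
    ((memW a b X₁ X₂ K₁ K₂ [(true, 1), (false, 1)] ∧
      memW a b X₁ X₂ K₁ K₂ [(false, -1), (true, -1)] ∧
      memW a b X₁ X₂ K₁ K₂ [(false, 1), (true, 1)] ∧
      memW a b X₁ X₂ K₁ K₂ [(true, -1), (false, -1)]) →
      ∃ u : List (Bool × ℤ), u <:+: w ∧
        (u ∈ setB ∨ wordInv u ∈ setB) ∧ ¬ memW a b K₁ K₂ X₁ X₂ u) := by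
  have hbig := fun s => memW_singleton_of_two_le_abs hpow (s := s)
  constructor
  · by_contra! hA
    exact evalW_ne_one_of_pingPong (R := fun _ _ => False) hdisj hK₁ hK₂ hK₁X hK₂X hbig
      (fun _ _ _ _ _ => False.elim) hw hred
      (fun r hr hne hunit _ => hA r hr ⟨hne, hred.infix hr, hunit⟩) hrel
  · rintro ⟨hab, hab', hba, hba'⟩
    by_contra! hB
    exact evalW_ne_one_of_pingPong (R := fun s u => s.2 = u.2) hdisj hK₁ hK₂ hK₁X hK₂X hbig
      (fun _ _ hsu hs _ hexp => memW_pair_of_eq_exp hab hab' hba hba' hsu hs hexp) hw hred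
      (fun r hr hne hunit halt =>
        hB r hr (mem_setB_or_wordInv_mem_setB hne (hred.infix hr).1 hunit halt)) hrel
end

section
/- There exists a constant C > 0 such that for every real λ with 1.8 ≤ λ < 2, every nontrivial relator of the group G_{λ,2} = ⟨A_λ, B₂⟩ ≤ SL₂(ℝ) (i.e., every nonempty reduced word in the free group on two generators that evaluates to the identity) admits an exact subword of the form (A_λ B₂⁻¹)^k or (A_λ⁻¹ B₂)^k with k ≥ C/√(2-λ). In particular, the minimal number of syllables in a relator of G_{λ,2} is at least 2C/√(2-λ). -/
/-- The matrix `A_λ = [[1,λ],[0,1]]` in `SL₂(ℝ)`. -/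
def AmatR (lam : ℝ) : Matrix.SpecialLinearGroup (Fin 2) ℝ :=
  ⟨!![1, lam; 0, 1], by simp [Matrix.det_fin_two_of]⟩

/-- The matrix `B_μ = [[1,0],[μ,1]]` in `SL₂(ℝ)`. -/
def BmatR (mu : ℝ) : Matrix.SpecialLinearGroup (Fin 2) ℝ :=
  ⟨!![1, 0; mu, 1], by simp [Matrix.det_fin_two_of]⟩

/-!
Ping-pong on the projective line, run as an automaton. Read from the right, each syllable
`A_λ^n` or `B₂^m` of a reduced word carries an explicit cone of `ℝ²` (taken up to sign) into
another one, chosen according to the syllables read so far. The word carries the fixed vector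
of the generator that does not act first into one of these cones, none of which contains that
vector, so the word is not `1`.

All cones are robust except near the parabolic element `A₂⁻¹ B₂`. For `λ = 2 - e`, a round
`A_λ^{∓1} B₂^{±1}` raises the slope `x / y` of a vector by at most `7e` while it stays in the
window `|x / y + λ/2| ≤ r ≈ √e`, so crossing the window takes about `2r / 7e ≈ 1 / √e` rounds;
the cones stay away from the starting vector unless the word contains such a run of rounds.
The mirror `diag(1, -1)` conjugates `A^n, B^m` into `A^{-n}, B^{-m}`, which halves the case
analysis.
-/

open Set
open scoped Pointwise Matrix

theorem zpow_eq_of_map_add {G : Type*} [Group G] {f : ℝ → G}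
    (hf : ∀ a b, f (a + b) = f a * f b) (a : ℝ) (n : ℤ) : f a ^ n = f (n * a) := by
  let φ : Multiplicative ℝ →* G := MonoidHom.mk' (fun x => f x.toAdd) fun x y => hf _ _
  simpa [φ, ← zsmul_eq_mul] using (map_zpow φ (.ofAdd a) n).symm

theorem Set.MapsTo.union_neg {α β : Type*} [InvolutiveNeg α] [InvolutiveNeg β] {f : α → β}
    {S : Set α} {T : Set β} (hf : f.Odd) (h : MapsTo f S (T ∪ -T)) :
    MapsTo f (S ∪ -S) (T ∪ -T) := by
  rintro v (hv | hv)
  · exact h hv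
  · simpa [hf.eq, or_comm] using h hv

theorem AmatR_add (a b : ℝ) : AmatR (a + b) = AmatR a * AmatR b := by
  refine Subtype.ext ?_
  rw [Matrix.SpecialLinearGroup.coe_mul]
  simp [AmatR, add_comm]

theorem BmatR_add (a b : ℝ) : BmatR (a + b) = BmatR a * BmatR b := by
  refine Subtype.ext ?_
  rw [Matrix.SpecialLinearGroup.coe_mul]
  simp [BmatR]

theorem IsReducedWord.of_cons {p : Bool × ℤ} {w : List (Bool × ℤ)}
    (h : IsReducedWord (p :: w)) : IsReducedWord w :=
  ⟨h.1.tail, fun x hx => h.2 x (List.mem_cons_of_mem p hx)⟩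

namespace ShortRelator

def act (lam : ℝ) (p : Bool × ℤ) (v : Fin 2 → ℝ) : Fin 2 → ℝ :=
  (↑((if p.1 then AmatR lam else BmatR 2) ^ p.2) : Matrix (Fin 2) (Fin 2) ℝ) *ᵥ v

@[simp] theorem act_true (lam : ℝ) (n : ℤ) (v : Fin 2 → ℝ) :
    act lam (true, n) v = ![v 0 + n * lam * v 1, v 1] := by
  rw [act, if_pos rfl, zpow_eq_of_map_add AmatR_add]
  ext i; fin_cases i <;> simp [AmatR, Matrix.mulVec, dotProduct]

@[simp] theorem act_false (lam : ℝ) (n : ℤ) (v : Fin 2 → ℝ) :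
    act lam (false, n) v = ![v 0, 2 * n * v 0 + v 1] := by
  rw [act, if_neg Bool.false_ne_true, zpow_eq_of_map_add BmatR_add]
  ext i; fin_cases i <;> simp [BmatR, Matrix.mulVec, dotProduct, mul_comm]

theorem act_odd (lam : ℝ) (p : Bool × ℤ) : (act lam p).Odd :=
  fun v => Matrix.mulVec_neg v _

theorem evalW_cons_mulVec (lam : ℝ) (p : Bool × ℤ) (w : List (Bool × ℤ)) (v : Fin 2 → ℝ) :
    (↑(evalW (AmatR lam) (BmatR 2) (p :: w)) : Matrix (Fin 2) (Fin 2) ℝ) *ᵥ v =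
      act lam p ((↑(evalW (AmatR lam) (BmatR 2) w) : Matrix (Fin 2) (Fin 2) ℝ) *ᵥ v) := by
  rw [evalW, List.map_cons, List.prod_cons, Matrix.SpecialLinearGroup.coe_mul, act,
    ← Matrix.mulVec_mulVec]
  rfl

def mirror : Bool → (Fin 2 → ℝ) → Fin 2 → ℝ
  | false, v => v
  | true, v => ![v 0, -v 1]

@[simp] theorem mirror_false : mirror false = id := rfl

theorem mirror_odd (s : Bool) : (mirror s).Odd := by
  intro v
  cases s
  · rfl
  · ext i; fin_cases i <;> simp [mirror]

theorem mirror_xor (s t : Bool) (v : Fin 2 → ℝ) :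
    mirror (xor s t) v = mirror t (mirror s v) := by
  cases s <;> cases t <;> ext i <;> fin_cases i <;> simp [mirror]

theorem mirror_act (lam : ℝ) (s b : Bool) (n : ℤ) (v : Fin 2 → ℝ) :
    mirror s (act lam (b, n) v) = act lam (b, if s then -n else n) (mirror s v) := by
  cases s
  · rfl
  · cases b <;> ext i <;> fin_cases i <;> simp [mirror, add_comm]

/-- `r` is the half-width of the window of slopes around `-λ/2`. -/
structure Params (lam e r : ℝ) : Prop where
  lam_eq : lam = 2 - e
  e_pos : 0 < e
  e_le : e ≤ 1 / 5
  r_pos : 0 < r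
  r_le : r ≤ 3 / 20
  r_sq_le : r ^ 2 ≤ e

variable {lam e r : ℝ}

theorem Params.lam_ge (H : Params lam e r) : 9 / 5 ≤ lam := by
  linarith [H.lam_eq, H.e_le]

def coneA (lam : ℝ) : Set (Fin 2 → ℝ) := {v | 0 < v 1 ∧ (lam / 2 + 1 / 5) * v 1 ≤ v 0}

def coneB : Set (Fin 2 → ℝ) := {v | 0 < v 0 ∧ 2 * v 0 ≤ v 1}

/-- Upper bound for the slope `x / y` after `j` rounds: it starts just below the window and
grows by `7e` per round (`slope_round_le`). -/
noncomputable def slopeBound (lam e r : ℝ) (j : ℕ) : ℝ := -(lam / 2) - r + 7 * e * j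

/-- The last condition bounds the slope of `A_λ⁻¹ v`. -/
def coneB1 (lam e r : ℝ) (j : ℕ) : Set (Fin 2 → ℝ) :=
  {v | 0 < v 1 ∧ v 1 ≤ 2 * v 0 ∧ (1 - e - 2 * r) * v 0 ≤ (lam / 2 - r) * v 1 ∧
    v 0 - lam * v 1 ≤ slopeBound lam e r (j + 1) * v 1}

def coneA1 (lam e r : ℝ) (j : ℕ) : Set (Fin 2 → ℝ) :=
  {v | 0 < v 1 ∧ (1 / 2 - lam) * v 1 ≤ v 0 ∧ v 0 ≤ slopeBound lam e r j * v 1 ∧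
    v 0 ≤ (r - lam / 2) * v 1}

theorem mapsTo_A_pos (H : Params lam e r) {n : ℤ} (hn : 1 ≤ n) :
    MapsTo (act lam (true, n)) {v | 0 ≤ v 0 ∧ 0 < v 1} (coneA lam ∪ -coneA lam) := by
  rintro v ⟨hx, hy⟩
  have hly : 9 / 5 * v 1 ≤ lam * v 1 := mul_le_mul_of_nonneg_right H.lam_ge hy.le
  have hnly : lam * v 1 ≤ n * (lam * v 1) :=
    le_mul_of_one_le_left (by linarith) (by exact_mod_cast hn)
  left
  simp only [coneA, mem_ofPred_eq, act_true, Matrix.cons_val_zero, Matrix.cons_val_one]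
  exact ⟨hy, by linarith⟩

theorem mapsTo_A_neg_coneB (H : Params lam e r) {n : ℤ} (hn : n ≤ -1) :
    MapsTo (mirror true ∘ act lam (true, n)) coneB (coneA lam ∪ -coneA lam) := by
  rintro v ⟨hx, hxy⟩
  have hy : 0 < v 1 := by linarith
  have hly : 9 / 5 * v 1 ≤ lam * v 1 := mul_le_mul_of_nonneg_right H.lam_ge hy.le
  have hnly : lam * v 1 ≤ -n * (lam * v 1) :=
    le_mul_of_one_le_left (by linarith) (by exact_mod_cast Int.neg_le_neg hn)
  right
  simp only [coneA, mem_neg, mem_ofPred_eq, Function.comp_apply, mirror, act_true, Pi.neg_apply,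
    Matrix.cons_val_zero, Matrix.cons_val_one, neg_neg]
  exact ⟨hy, by linarith⟩

theorem mapsTo_A_neg_coneB1 (H : Params lam e r) {j : ℕ} {n : ℤ} (hn : n ≤ -2) :
    MapsTo (mirror true ∘ act lam (true, n)) (coneB1 lam e r j) (coneA lam ∪ -coneA lam) := by
  rintro v ⟨hy, -, hslope, -⟩
  have hx : v 0 ≤ 3 / 2 * v 1 := by nlinarith [H.lam_eq, H.e_le, H.r_le, H.r_pos]
  have hly : 9 / 5 * v 1 ≤ lam * v 1 := mul_le_mul_of_nonneg_right H.lam_ge hy.le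
  have hnly : 2 * (lam * v 1) ≤ -n * (lam * v 1) :=
    mul_le_mul_of_nonneg_right (by exact_mod_cast Int.neg_le_neg hn) (by linarith)
  right
  simp only [coneA, mem_neg, mem_ofPred_eq, Function.comp_apply, mirror, act_true, Pi.neg_apply,
    Matrix.cons_val_zero, Matrix.cons_val_one, neg_neg]
  exact ⟨hy, by linarith⟩

theorem mapsTo_B_pos_coneA (H : Params lam e r) {m : ℤ} (hm : 1 ≤ m) :
    MapsTo (act lam (false, m)) (coneA lam) (coneB ∪ -coneB) := by
  rintro v ⟨hy, hx⟩
  have hx0 : 0 < v 0 := by nlinarith [H.lam_ge]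
  have hmx : v 0 ≤ m * v 0 := le_mul_of_one_le_left hx0.le (by exact_mod_cast hm)
  left
  simp only [coneB, mem_ofPred_eq, act_false, Matrix.cons_val_zero, Matrix.cons_val_one]
  exact ⟨hx0, by linarith⟩

theorem mapsTo_B_neg_coneA (H : Params lam e r) {m : ℤ} (hm : m ≤ -2) :
    MapsTo (mirror true ∘ act lam (false, m)) (coneA lam) (coneB ∪ -coneB) := by
  rintro v ⟨hy, hx⟩
  have hx0 : 0 < v 0 := by nlinarith [H.lam_ge]
  have hmx : m * v 0 ≤ -2 * v 0 := mul_le_mul_of_nonneg_right (by exact_mod_cast hm) hx0.le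
  have hly : 9 / 5 * v 1 ≤ lam * v 1 := mul_le_mul_of_nonneg_right H.lam_ge hy.le
  left
  simp only [coneB, mem_ofPred_eq, Function.comp_apply, mirror, act_false,
    Matrix.cons_val_zero, Matrix.cons_val_one]
  exact ⟨hx0, by linarith⟩

theorem mapsTo_B_neg_coneA1 (H : Params lam e r) {j : ℕ} {m : ℤ} (hm : m ≤ -1) :
    MapsTo (mirror true ∘ act lam (false, m)) (coneA1 lam e r j) (coneB ∪ -coneB) := by
  rintro v ⟨hy, -, -, hwin⟩
  have hx : v 0 ≤ -(1 / 2) * v 1 := by nlinarith [H.lam_ge, H.r_le]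
  have hmx : -1 * v 0 ≤ m * v 0 := mul_le_mul_of_nonpos_right (by exact_mod_cast hm) (by linarith)
  right
  simp only [coneB, mem_neg, mem_ofPred_eq, Function.comp_apply, mirror, act_false, Pi.neg_apply,
    Matrix.cons_val_zero, Matrix.cons_val_one, neg_neg]
  exact ⟨by linarith, by linarith⟩

theorem mapsTo_B_pos_coneA1 (H : Params lam e r) {j : ℕ} {m : ℤ} (hm : 2 ≤ m) :
    MapsTo (act lam (false, m)) (coneA1 lam e r j) (coneB ∪ -coneB) := by
  rintro v ⟨hy, -, -, hwin⟩
  have hx : v 0 ≤ -(1 / 2) * v 1 := by nlinarith [H.lam_ge, H.r_le]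
  have hmx : m * v 0 ≤ 2 * v 0 := mul_le_mul_of_nonpos_right (by exact_mod_cast hm) (by linarith)
  right
  simp only [coneB, mem_neg, mem_ofPred_eq, act_false, Pi.neg_apply,
    Matrix.cons_val_zero, Matrix.cons_val_one]
  exact ⟨by linarith, by linarith⟩

theorem mapsTo_B_negOne_coneA (H : Params lam e r) :
    MapsTo (mirror true ∘ act lam (false, -1)) (coneA lam)
      (coneB1 lam e r 0 ∪ -coneB1 lam e r 0) := by
  obtain ⟨rfl, he, he5, hr, hr3, hr2⟩ := H
  rintro v ⟨hy, hx⟩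
  have hu : 6 / 5 * v 1 ≤ 2 * v 0 - v 1 := by nlinarith [mul_le_mul_of_nonneg_right he5 hy.le]
  have hc : 6 / 13 ≤ 1 / 2 + 13 / 2 * e - r := by nlinarith [sq_nonneg (13 * r - 1)]
  left
  simp only [coneB1, mem_ofPred_eq, Function.comp_apply, mirror, act_false, slopeBound,
    Matrix.cons_val_zero, Matrix.cons_val_one]
  push_cast
  refine ⟨by linarith, by linarith, by nlinarith, ?_⟩
  nlinarith [mul_le_mul hc hu (by positivity) (by linarith)]

theorem mapsTo_A_negOne_coneB1 {j : ℕ} (hcap : 7 * e * (j + 1) ≤ 2 * r) :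
    MapsTo (act lam (true, -1)) (coneB1 lam e r j)
      (coneA1 lam e r (j + 1) ∪ -coneA1 lam e r (j + 1)) := by
  rintro v ⟨hy, hx, -, hslope⟩
  have hwin : slopeBound lam e r (j + 1) * v 1 ≤ (r - lam / 2) * v 1 := by
    refine mul_le_mul_of_nonneg_right ?_ hy.le
    simp only [slopeBound]; push_cast; linarith
  left
  simp only [coneA1, mem_ofPred_eq, act_true, Matrix.cons_val_zero, Matrix.cons_val_one]
  push_cast
  exact ⟨hy, by linarith, by linarith, by linarith⟩

theorem slope_round_le (H : Params lam e r) {x y S : ℝ} (hy : 0 < y)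
    (hlo : (1 / 2 - lam) * y ≤ x) (hwin : x ≤ (r - lam / 2) * y)
    (hS : x + 7 * e * y ≤ S * y) (hS0 : -(lam / 2) - r + 7 * e ≤ S) :
    S * (2 * x + y) ≤ x - lam * (2 * x + y) := by
  obtain ⟨rfl, he, he5, hr, hr3, hr2⟩ := H
  have hneg : 2 * x + y ≤ -(1 - e - 2 * r) * y := by nlinarith
  -- Below the window only `hS0` is needed; inside it, `(x / y + λ/2)² ≤ r² ≤ e`.
  rcases le_or_gt x (-((2 - e) / 2 + r) * y) with hfar | hnear
  · have hco : 0 < 1 + 13 * e - 2 * r := by nlinarith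
    have hprod : (x + ((2 - e) / 2 + r) * y) * (1 + 13 * e - 2 * r) ≤ 0 :=
      mul_nonpos_of_nonpos_of_nonneg (by linarith) hco.le
    nlinarith [mul_le_mul_of_nonpos_right hS0 (by nlinarith : 2 * x + y ≤ 0),
      mul_nonneg (mul_nonneg he.le hr.le) hy.le, mul_nonneg (mul_nonneg he.le he.le) hy.le,
      mul_nonneg (mul_nonneg hr.le hr.le) hy.le, mul_nonneg he.le hy.le]
  · have hsq : (x + (2 - e) / 2 * y) ^ 2 ≤ e * y ^ 2 := by nlinarith [sq_nonneg y]
    have hprod : y / 2 * (7 * e * y) ≤ -(2 * x + y) * (S * y - x) :=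
      mul_le_mul (by nlinarith) (by linarith) (by positivity) (by nlinarith)
    have : (S * (2 * x + y) - (x - (2 - e) * (2 * x + y))) * y ≤ 0 := by
      nlinarith [mul_nonneg (mul_nonneg he.le he.le) (sq_nonneg y), mul_pos hy hy]
    nlinarith

theorem mapsTo_B_one_coneA1 (H : Params lam e r) {j : ℕ} :
    MapsTo (act lam (false, 1)) (coneA1 lam e r j) (coneB1 lam e r j ∪ -coneB1 lam e r j) := by
  rintro v ⟨hy, hlo, hslope, hwin⟩
  have hS : v 0 + 7 * e * v 1 ≤ slopeBound lam e r (j + 1) * v 1 := by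
    simp only [slopeBound] at hslope ⊢; push_cast; linarith
  have hS0 : -(lam / 2) - r + 7 * e ≤ slopeBound lam e r (j + 1) := by
    simp only [slopeBound]; push_cast; nlinarith [H.e_pos, (Nat.cast_nonneg j : (0 : ℝ) ≤ j)]
  have hneg : 2 * v 0 + v 1 < 0 := by nlinarith [H.lam_eq, H.e_le, H.r_le]
  right
  simp only [coneB1, mem_neg, mem_ofPred_eq, act_false, Pi.neg_apply,
    Matrix.cons_val_zero, Matrix.cons_val_one]
  push_cast
  refine ⟨by linarith, by linarith, by nlinarith [H.lam_eq], ?_⟩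
  nlinarith [slope_round_le H hy hlo hwin hS hS0]


def altPat (s : Bool) (k : ℕ) : List (Bool × ℤ) :=
  (List.replicate k [(true, if s then 1 else -1), (false, if s then -1 else 1)]).flatten

theorem altPat_prefix_altPat {s : Bool} {k j : ℕ} (h : k ≤ j) : altPat s k <+: altPat s j :=
  ⟨altPat s (j - k), by
    rw [altPat, altPat, altPat, ← List.flatten_append, ← List.replicate_add, Nat.add_sub_cancel' h]⟩

theorem length_altPat (s : Bool) (k : ℕ) : (altPat s k).length = 2 * k := by
  simp [altPat, Nat.mul_comm]

/-- `a`, `b`: after a generic syllable of that letter. `b1 j`: after a syllable `B^{±1}` that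
follows `j` rounds `A^{∓1} B^{±1}`; `a1 j`: after the `A^{∓1}` completing the `j`-th round. -/
inductive Zone
  | a
  | b
  | b1 (j : ℕ)
  | a1 (j : ℕ)

structure State where
  zone : Zone
  flipped : Bool

namespace Zone

def letter : Zone → Bool
  | a | a1 _ => true
  | b | b1 _ => false

def depth : Zone → ℕ
  | a | b => 0
  | b1 j | a1 j => j

def cone (lam e r : ℝ) : Zone → Set (Fin 2 → ℝ)
  | a => coneA lam
  | b => coneB
  | b1 j => coneB1 lam e r j
  | a1 j => coneA1 lam e r j

def next : Zone → ℤ → State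
  | a, n => if n = -1 then ⟨b1 0, true⟩ else ⟨b, decide (n < 0)⟩
  | b, n => ⟨a, decide (n < 0)⟩
  | b1 j, n => if n = -1 then ⟨a1 (j + 1), false⟩ else ⟨a, decide (n < 0)⟩
  | a1 j, n => if n = 1 then ⟨b1 j, false⟩ else ⟨b, decide (n < 0)⟩

theorem letter_next (z : Zone) (n : ℤ) : (z.next n).zone.letter = !z.letter := by
  cases z <;> simp only [next] <;> (try split_ifs) <;> rfl

theorem cone_subset (H : Params lam e r) (z : Zone) :
    z.cone lam e r ⊆ {v | 0 < v 1 ∧ v 0 ≠ 0} := by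
  have := H.lam_ge
  have := H.r_le
  cases z with
  | a => exact fun v ⟨hy, hx⟩ => ⟨hy, by nlinarith⟩
  | b => exact fun v ⟨hx, _⟩ => ⟨by linarith, hx.ne'⟩
  | b1 j => exact fun v ⟨hy, hx, _⟩ => ⟨hy, by linarith⟩
  | a1 j => exact fun v ⟨hy, _, _, hx⟩ => ⟨hy, by nlinarith⟩

theorem mapsTo_next (H : Params lam e r) {z : Zone} {n : ℤ} (hn : n ≠ 0)
    (hcap : 7 * e * (z.next n).zone.depth ≤ 2 * r) :
    MapsTo (mirror (z.next n).flipped ∘ act lam (!z.letter, n))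
      (z.cone lam e r ∪ -z.cone lam e r)
      ((z.next n).zone.cone lam e r ∪ -(z.next n).zone.cone lam e r) := by
  refine MapsTo.union_neg ((mirror_odd _).comp_odd (act_odd _ _)) ?_
  rcases lt_or_gt_of_ne hn with hneg | hpos
  · cases z with
    | a =>
      simp only [next]
      split_ifs with h1
      · subst h1; exact mapsTo_B_negOne_coneA H
      · simpa [cone, letter, hneg] using mapsTo_B_neg_coneA H (m := n) (by omega)
    | b => simpa [next, cone, letter, hneg] using mapsTo_A_neg_coneB H (n := n) (by omega)
    | b1 j =>
      simp only [next] at hcap ⊢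
      split_ifs with h1
      · subst h1
        simp only [depth] at hcap
        push_cast at hcap
        exact mapsTo_A_negOne_coneB1 hcap
      · simpa [cone, letter, hneg] using mapsTo_A_neg_coneB1 H (j := j) (n := n) (by omega)
    | a1 j =>
      simpa [next, cone, letter, hneg, show n ≠ 1 by omega] using
        mapsTo_B_neg_coneA1 H (j := j) (m := n) (by omega)
  · cases z with
    | a =>
      simpa [next, cone, letter, show n ≠ -1 by omega, hpos.not_gt] using
        mapsTo_B_pos_coneA H (m := n) hpos
    | b =>
      simpa [next, cone, letter, hpos.not_gt] using (mapsTo_A_pos H (n := n) hpos).mono_left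
        fun v (hv : v ∈ coneB) => ⟨hv.1.le, by linarith [hv.1, hv.2]⟩
    | b1 j =>
      simpa [next, cone, letter, show n ≠ -1 by omega, hpos.not_gt] using
        (mapsTo_A_pos H (n := n) hpos).mono_left
          fun v (hv : v ∈ coneB1 lam e r j) => ⟨by linarith [hv.1, hv.2.1], hv.1⟩
    | a1 j =>
      simp only [next]
      split_ifs with h1
      · subst h1; exact mapsTo_B_one_coneA1 H
      · simpa [cone, letter, hpos.not_gt] using mapsTo_B_pos_coneA1 H (j := j) (m := n) (by omega)

end Zone

namespace State

def region (lam e r : ℝ) (st : State) : Set (Fin 2 → ℝ) :=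
  mirror st.flipped ⁻¹' (st.zone.cone lam e r ∪ -st.zone.cone lam e r)

/-- In the mirrored frame the exponent of the syllable changes sign (`mirror_act`). -/
def step (st : State) (p : Bool × ℤ) : State :=
  let q := st.zone.next (if st.flipped then -p.2 else p.2)
  ⟨q.zone, xor st.flipped q.flipped⟩

def init (p : Bool × ℤ) : State := ⟨if p.1 then .a else .b, decide (p.2 < 0)⟩

def pattern : State → List (Bool × ℤ)
  | ⟨.a1 j, s⟩ => altPat s j
  | ⟨.b1 j, s⟩ => (false, if s then -1 else 1) :: altPat s j
  | _ => []

theorem letter_step (st : State) (p : Bool × ℤ) : (st.step p).zone.letter = !st.zone.letter :=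
  Zone.letter_next _ _

theorem pattern_step {st : State} {p : Bool × ℤ} (hp : p.1 = !st.zone.letter) :
    (st.step p).pattern = [] ∨ (st.step p).pattern = p :: st.pattern := by
  obtain ⟨z, s⟩ := st
  obtain ⟨b, n⟩ := p
  dsimp only at hp
  subst hp
  cases z <;> cases s <;> simp only [step, Zone.next] <;> (try split_ifs) <;>
    simp_all [pattern, Zone.letter, altPat, List.replicate_succ]
  omega

theorem altPat_depth_suffix (st : State) : altPat st.flipped st.zone.depth <:+ st.pattern := by
  obtain ⟨z, s⟩ := st
  cases z <;> simp [pattern, Zone.depth, altPat, List.suffix_cons]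

theorem mapsTo_step (H : Params lam e r) {st : State} {p : Bool × ℤ}
    (hp : p.1 = !st.zone.letter) (hn : p.2 ≠ 0)
    (hcap : 7 * e * (st.step p).zone.depth ≤ 2 * r) :
    MapsTo (act lam p) (st.region lam e r) ((st.step p).region lam e r) := by
  obtain ⟨z, s⟩ := st
  obtain ⟨b, n⟩ := p
  dsimp only at hp hn
  subst hp
  intro v hv
  have := Zone.mapsTo_next H (n := if s then -n else n) (by split_ifs <;> omega) hcap hv
  simp only [region, step, mem_preimage]
  rwa [mirror_xor, mirror_act]

end State

def start (b : Bool) : Fin 2 → ℝ := if b then ![0, 1] else ![1, 0]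

theorem act_start_mem (H : Params lam e r) {p : Bool × ℤ} (hn : p.2 ≠ 0) :
    act lam p (start p.1) ∈ (State.init p).region lam e r := by
  obtain ⟨b, n⟩ := p
  have := H.lam_ge
  rcases lt_or_gt_of_ne hn with h | h
  · have h' : (n : ℝ) ≤ -1 := by exact_mod_cast Int.le_sub_one_of_lt h
    cases b <;> simp [State.init, State.region, start, Zone.cone, coneA, coneB, mirror, h]
    · left; linarith
    · right; nlinarith
  · have h' : (1 : ℝ) ≤ n := by exact_mod_cast h
    cases b <;> simp [State.init, State.region, start, Zone.cone, coneA, coneB, h.not_gt]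
    · left; exact h'
    · left; nlinarith

theorem start_not_mem (H : Params lam e r) (b : Bool) (st : State) :
    start b ∉ st.region lam e r := by
  obtain ⟨z, s⟩ := st
  rintro (h | h) <;> have := Zone.cone_subset H z h <;> cases b <;> cases s <;>
    simp [start, mirror] at this

def wordState : Bool × ℤ → List (Bool × ℤ) → State
  | p, [] => .init p
  | p, q :: t => (wordState q t).step p

theorem letter_wordState :
    ∀ (p : Bool × ℤ) (w : List (Bool × ℤ)), (p :: w).IsChain (·.1 ≠ ·.1) →
      (wordState p w).zone.letter = p.1
  | (b, n), [], _ => by cases b <;> rfl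
  | p, q :: t, h => by
    rw [wordState, State.letter_step, letter_wordState q t h.tail]
    exact (Bool.eq_not.2 (List.isChain_cons_cons.1 h).1).symm

theorem fst_eq_not_letter_wordState {p q : Bool × ℤ} {t : List (Bool × ℤ)}
    (h : (p :: q :: t).IsChain (·.1 ≠ ·.1)) : p.1 = !(wordState q t).zone.letter := by
  rw [letter_wordState q t h.tail]
  exact Bool.eq_not.2 (List.isChain_cons_cons.1 h).1

theorem pattern_wordState_prefix :
    ∀ (p : Bool × ℤ) (w : List (Bool × ℤ)), (p :: w).IsChain (·.1 ≠ ·.1) →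
      (wordState p w).pattern <+: p :: w
  | (b, n), [], _ => by cases b <;> simp [wordState, State.init, State.pattern]
  | p, q :: t, h => by
    rcases State.pattern_step (fst_eq_not_letter_wordState h) with h' | h' <;>
      rw [wordState, h']
    · exact List.nil_prefix
    · exact List.cons_prefix_cons.2 ⟨rfl, pattern_wordState_prefix q t h.tail⟩

theorem depth_wordState_le {K : ℕ} {p : Bool × ℤ} {w : List (Bool × ℤ)}
    (hw : (p :: w).IsChain (·.1 ≠ ·.1)) (hK : ∀ s, ¬ altPat s (K + 1) <:+: p :: w) :
    (wordState p w).zone.depth ≤ K := by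
  by_contra! hlt
  exact hK _ ((altPat_prefix_altPat hlt).isInfix.trans <|
    (wordState p w).altPat_depth_suffix.isInfix.trans (pattern_wordState_prefix p w hw).isInfix)

theorem mulVec_start_mem (H : Params lam e r) {K : ℕ} (hK : 7 * e * K ≤ 2 * r) :
    ∀ (p : Bool × ℤ) (w : List (Bool × ℤ)), IsReducedWord (p :: w) →
      (∀ s, ¬ altPat s (K + 1) <:+: p :: w) →
      (↑(evalW (AmatR lam) (BmatR 2) (p :: w)) : Matrix (Fin 2) (Fin 2) ℝ) *ᵥ
        start ((p :: w).getLast (List.cons_ne_nil p w)).1 ∈ (wordState p w).region lam e r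
  | p, [], hw, _ => by
    rw [evalW_cons_mulVec, show evalW (AmatR lam) (BmatR 2) [] = 1 from rfl,
      Matrix.SpecialLinearGroup.coe_one, Matrix.one_mulVec]
    exact act_start_mem H (hw.2 p List.mem_cons_self)
  | p, q :: t, hw, hpat => by
    have hdepth : 7 * e * (wordState p (q :: t)).zone.depth ≤ 2 * r :=
      calc 7 * e * (wordState p (q :: t)).zone.depth ≤ 7 * e * K := by
            gcongr
            · linarith [H.e_pos]
            · exact_mod_cast depth_wordState_le hw.1 hpat
        _ ≤ 2 * r := hK
    rw [evalW_cons_mulVec, List.getLast_cons_cons]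
    exact State.mapsTo_step H (fst_eq_not_letter_wordState hw.1) (hw.2 p List.mem_cons_self)
      hdepth (mulVec_start_mem H hK q t (IsReducedWord.of_cons hw)
        fun s hs => hpat s (hs.trans (List.suffix_cons p _).isInfix))

theorem evalW_ne_one (H : Params lam e r) {K : ℕ} (hK : 7 * e * K ≤ 2 * r)
    {w : List (Bool × ℤ)} (hw : IsReducedWord w) (hne : w ≠ [])
    (hpat : ∀ s, ¬ altPat s (K + 1) <:+: w) : evalW (AmatR lam) (BmatR 2) w ≠ 1 := by
  obtain ⟨p, w, rfl⟩ := List.exists_cons_of_ne_nil hne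
  intro h1
  have := mulVec_start_mem H hK p w hw hpat
  rw [h1, Matrix.SpecialLinearGroup.coe_one, Matrix.one_mulVec] at this
  exact start_not_mem H _ _ this

end ShortRelator

open ShortRelator

/-- there is `C > 0` such that for all real `1.8 ≤ λ < 2`, every nontrivial
relator of `G_{λ,2} = ⟨A_λ, B₂⟩ ≤ SL₂(ℝ)` admits an exact subword of the form
`(A_λ B₂⁻¹)^k` or `(A_λ⁻¹ B₂)^k` with `k ≥ C/√(2-λ)`; in particular every relator has at
least `2C/√(2-λ)` syllables. -/
theorem stmt_18 :
    ∃ C : ℝ, 0 < C ∧ ∀ lam : ℝ, 1.8 ≤ lam → lam < 2 →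
      ∀ w : List (Bool × ℤ), IsReducedWord w → w ≠ [] →
        evalW (AmatR lam) (BmatR 2) w = 1 →
        (∃ (k : ℕ) (u : List (Bool × ℤ)), C / Real.sqrt (2 - lam) ≤ (k : ℝ) ∧
          u <:+: w ∧
          (u = (List.replicate k ([(true, 1), (false, -1)] : List (Bool × ℤ))).flatten ∨
           u = (List.replicate k ([(true, -1), (false, 1)] : List (Bool × ℤ))).flatten)) ∧
        2 * C / Real.sqrt (2 - lam) ≤ (w.length : ℝ) := by
  refine ⟨2 / 21, by norm_num, fun lam hlam hlam2 w hw hne heval => ?_⟩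
  set s := Real.sqrt (2 - lam)
  have hs : 0 < s := Real.sqrt_pos.2 (by linarith)
  have hss : s ^ 2 = 2 - lam := Real.sq_sqrt (by linarith)
  have H : Params lam (2 - lam) (s / 3) :=
    ⟨by ring, by linarith, by norm_num at hlam; linarith, by positivity,
      by nlinarith [show (1.8 : ℝ) = 9 / 5 by norm_num], by nlinarith⟩
  set K := ⌊2 / (21 * s)⌋₊
  have hK : 7 * (2 - lam) * K ≤ 2 * (s / 3) := by
    rw [← hss]
    calc 7 * s ^ 2 * K ≤ 7 * s ^ 2 * (2 / (21 * s)) := by gcongr; exact Nat.floor_le (by positivity)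
      _ = 2 * (s / 3) := by field_simp; ring
  obtain ⟨t, ht⟩ : ∃ t, altPat t (K + 1) <:+: w := by
    by_contra! h
    exact evalW_ne_one H hK hw hne h heval
  have hC : 2 / 21 / s ≤ ((K + 1 : ℕ) : ℝ) := by
    rw [div_div]; push_cast; exact (Nat.lt_floor_add_one _).le
  have hlen : ((2 * (K + 1) : ℕ) : ℝ) ≤ w.length := by
    exact_mod_cast length_altPat t (K + 1) ▸ ht.length_le
  refine ⟨⟨K + 1, altPat t (K + 1), hC, ht, by cases t <;> simp [altPat]⟩, ?_⟩
  rw [mul_div_assoc]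
  push_cast at hC hlen
  linarith
end
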